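/- arXiv:1904.00127 — 4 statements merged into one kernel-verified Lean document; each statement's English description precedes it below -/
import Mathlib

section
/- Let α > 0, δ > 0 and ξ ∈ ℝ². Let U(x) = log( 2α²δ^α / (δ^α + |x − ξ|^α)² ) be the standard singular bubble and define Z₀(x) = (δ^α − |x − ξ|^α)/(δ^α + |x − ξ|^α). Then at every point x ∈ ℝ² with x ≠ ξ, one has −ΔZ₀(x) = |x − ξ|^{α−2} · exp(U(x)) · Z₀(x), where Δ denotes the Laplacian (the sum of the two second partial derivatives). -/
open MeasureTheory Real

noncomputable section

/-- The plane `ℝ²`. -/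
abbrev Plane := EuclideanSpace ℝ (Fin 2)

/-- The Laplacian of `f : ℝ² → ℝ`: the sum of the two second partial derivatives. -/
noncomputable def lap (f : Plane → ℝ) (x : Plane) : ℝ :=
  ∑ i : Fin 2,
    fderiv ℝ (fun y => fderiv ℝ f y (EuclideanSpace.single i 1)) x (EuclideanSpace.single i 1)

/-- The standard singular bubble `U(x) = log(2α²δ^α / (δ^α + |x-ξ|^α)²)`. -/
noncomputable def bubble (α δ : ℝ) (ξ : Plane) (x : Plane) : ℝ :=
  Real.log (2 * α ^ 2 * δ ^ α / (δ ^ α + ‖x - ξ‖ ^ α) ^ 2)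

/-- `Y₀(y) = (1 - |y|^α)/(1 + |y|^α)`. -/
noncomputable def Ynull (α : ℝ) (y : Plane) : ℝ :=
  (1 - ‖y‖ ^ α) / (1 + ‖y‖ ^ α)

/-!
Z₀ is radial: `Z₀(x) = φ(‖x - ξ‖²)` with `φ(s) = (c - s^p)/(c + s^p)`, `c = δ^α`, `p = α/2`.
For a function of `s = ‖x - ξ‖²` the chain rule gives `Δ[φ(s)] = 4 φ'(s) + 4 s φ''(s)`, and a
one-variable computation shows `4 φ' + 4 s φ'' = -s^(p-1) · 2 (2p)² c/(c + s^p)² · φ`. Since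
`s^(p-1) = ‖x - ξ‖^(α-2)` and `e^U = 2 α² c/(c + s^p)²`, this is the claim.
-/

open Filter Topology

section RadialProfile

variable (c p : ℝ)

def radialProfile (t : ℝ) : ℝ := (c - t ^ p) / (c + t ^ p)

def radialProfileDeriv (t : ℝ) : ℝ := -(2 * c * p * t ^ (p - 1)) / (c + t ^ p) ^ 2

def radialProfileSecondDeriv (t : ℝ) : ℝ :=
  -(2 * c * p * t ^ (p - 2) * ((p - 1) * (c + t ^ p) - 2 * p * t ^ p)) / (c + t ^ p) ^ 3

variable {c p}

theorem hasDerivAt_radialProfile (hc : 0 ≤ c) {t : ℝ} (ht : 0 < t) :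
    HasDerivAt (radialProfile c p) (radialProfileDeriv c p t) t := by
  have hpow := Real.hasDerivAt_rpow_const (p := p) (Or.inl ht.ne')
  have hq : c + t ^ p ≠ 0 := by positivity
  refine (((hasDerivAt_const t c).fun_sub hpow).fun_div
    ((hasDerivAt_const t c).fun_add hpow) hq).congr_deriv ?_
  rw [radialProfileDeriv]
  field_simp
  ring

theorem hasDerivAt_radialProfileDeriv (hc : 0 ≤ c) {t : ℝ} (ht : 0 < t) :
    HasDerivAt (radialProfileDeriv c p) (radialProfileSecondDeriv c p t) t := by
  have hpow := Real.hasDerivAt_rpow_const (p := p) (Or.inl ht.ne')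
  have hpow' := Real.hasDerivAt_rpow_const (p := p - 1) (Or.inl ht.ne')
  have hq : c + t ^ p ≠ 0 := by positivity
  refine (((hpow'.const_mul (2 * c * p)).fun_neg).fun_div
    (((hasDerivAt_const t c).fun_add hpow).fun_pow 2) (pow_ne_zero 2 hq)).congr_deriv ?_
  have hsplit : t ^ (p - 1) = t ^ (p - 2) * t := by
    rw [← Real.rpow_add_one ht.ne']; ring_nf
  have hsplit' : t ^ p = t ^ (p - 2) * t ^ 2 := by
    rw [← Real.rpow_add_natCast ht.ne']; ring_nf
  rw [radialProfileSecondDeriv, show p - 1 - 1 = p - 2 by ring, hsplit, hsplit']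
  field_simp
  ring

theorem radialProfile_laplace_eq (hc : 0 ≤ c) {s : ℝ} (hs : 0 < s) :
    4 * radialProfileDeriv c p s + 4 * s * radialProfileSecondDeriv c p s =
      -(s ^ (p - 1) * (2 * (2 * p) ^ 2 * c / (c + s ^ p) ^ 2) * radialProfile c p s) := by
  have hq : c + s ^ p ≠ 0 := by positivity
  have hsplit : s ^ (p - 1) = s ^ (p - 2) * s := by
    rw [← Real.rpow_add_one hs.ne']; ring_nf
  rw [radialProfileDeriv, radialProfileSecondDeriv, radialProfile, hsplit]
  field_simp
  ring

end RadialProfile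

theorem hasFDerivAt_norm_sub_sq (ξ x : Plane) :
    HasFDerivAt (fun y : Plane => ‖y - ξ‖ ^ 2) (2 • innerSL ℝ (x - ξ)) x := by
  simpa using ((hasFDerivAt_id x).sub_const ξ).norm_sq

theorem innerSL_single (v : Plane) (i : Fin 2) :
    innerSL ℝ v (EuclideanSpace.single i 1) = v i := by
  simp [EuclideanSpace.inner_single_right]

theorem lap_comp_norm_sub_sq {φ φ' : ℝ → ℝ} {φ'' : ℝ} (ξ x : Plane)
    (hφ : ∀ᶠ t in 𝓝 (‖x - ξ‖ ^ 2), HasDerivAt φ (φ' t) t)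
    (hφ' : HasDerivAt φ' φ'' (‖x - ξ‖ ^ 2)) :
    lap (fun y => φ (‖y - ξ‖ ^ 2)) x =
      4 * φ' (‖x - ξ‖ ^ 2) + 4 * ‖x - ξ‖ ^ 2 * φ'' := by
  have hcont : Continuous fun y : Plane => ‖y - ξ‖ ^ 2 := by fun_prop
  have hφ_near : ∀ᶠ y in 𝓝 x, HasDerivAt φ (φ' (‖y - ξ‖ ^ 2)) (‖y - ξ‖ ^ 2) :=
    hcont.continuousAt.eventually hφ
  have partial_eq (i : Fin 2) :
      (fun y => fderiv ℝ (fun y => φ (‖y - ξ‖ ^ 2)) y (EuclideanSpace.single i 1)) =ᶠ[𝓝 x]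
        fun y => φ' (‖y - ξ‖ ^ 2) * (2 * (y i - ξ i)) := by
    filter_upwards [hφ_near] with y hy
    have hd : HasFDerivAt (fun y => φ (‖y - ξ‖ ^ 2)) _ y :=
      hy.comp_hasFDerivAt y (hasFDerivAt_norm_sub_sq ξ y)
    rw [hd.fderiv]
    simp [innerSL_single]
  have second_partial (i : Fin 2) :
      fderiv ℝ (fun y => fderiv ℝ (fun y => φ (‖y - ξ‖ ^ 2)) y (EuclideanSpace.single i 1)) x
          (EuclideanSpace.single i 1) =
        4 * φ'' * (x i - ξ i) ^ 2 + 2 * φ' (‖x - ξ‖ ^ 2) := by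
    have hcoord : HasFDerivAt (fun y : Plane => 2 * (y i - ξ i))
        ((2 : ℝ) • (EuclideanSpace.proj i : Plane →L[ℝ] ℝ)) x :=
      ((EuclideanSpace.proj (𝕜 := ℝ) i).hasFDerivAt.sub_const _).const_mul 2
    have hd : HasFDerivAt (fun y => φ' (‖y - ξ‖ ^ 2) * (2 * (y i - ξ i))) _ x :=
      (hφ'.comp_hasFDerivAt x (hasFDerivAt_norm_sub_sq ξ x)).mul hcoord
    rw [(partial_eq i).fderiv_eq, hd.fderiv]
    simp only [Function.comp_apply, map_sub, add_apply, smul_apply, PiLp.proj_apply,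
      PiLp.single_eq_same, smul_eq_mul, mul_one, sub_apply, innerSL_single, nsmul_eq_mul,
      Nat.cast_ofNat]
    ring
  have hsq : ‖x - ξ‖ ^ 2 = (x 0 - ξ 0) ^ 2 + (x 1 - ξ 1) ^ 2 := by
    simp [EuclideanSpace.real_norm_sq_eq, Fin.sum_univ_two]
  rw [lap, Fin.sum_univ_two, second_partial, second_partial]
  linear_combination (-4 * φ'') * hsq

theorem rpow_eq_sq_rpow_half {r : ℝ} (hr : 0 ≤ r) (a : ℝ) : r ^ a = (r ^ 2) ^ (a / 2) := by
  rw [← Real.rpow_natCast, ← Real.rpow_mul hr]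
  ring_nf

theorem Znull_solves_linearized (α δ : ℝ) (hα : 0 < α) (hδ : 0 < δ) (ξ : Plane)
    (x : Plane) (hx : x ≠ ξ) :
    -lap (fun x => (δ ^ α - ‖x - ξ‖ ^ α) / (δ ^ α + ‖x - ξ‖ ^ α)) x =
      ‖x - ξ‖ ^ (α - 2) * Real.exp (bubble α δ ξ x) *
        ((δ ^ α - ‖x - ξ‖ ^ α) / (δ ^ α + ‖x - ξ‖ ^ α)) := by
  set c := δ ^ α
  have hc : 0 < c := Real.rpow_pos_of_pos hδ α
  have hr : 0 ≤ ‖x - ξ‖ := norm_nonneg _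
  have hs : 0 < ‖x - ξ‖ ^ 2 := by positivity [sub_ne_zero.mpr hx]
  have hZ (y : Plane) : (c - ‖y - ξ‖ ^ α) / (c + ‖y - ξ‖ ^ α) =
      radialProfile c (α / 2) (‖y - ξ‖ ^ 2) := by
    rw [radialProfile, ← rpow_eq_sq_rpow_half (norm_nonneg _)]
  have hφ : ∀ᶠ t in 𝓝 (‖x - ξ‖ ^ 2), HasDerivAt (radialProfile c (α / 2))
      (radialProfileDeriv c (α / 2) t) t := by
    filter_upwards [Ioi_mem_nhds hs] with t ht using hasDerivAt_radialProfile hc.le ht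
  have hexp : Real.exp (bubble α δ ξ x) = 2 * α ^ 2 * c / (c + ‖x - ξ‖ ^ α) ^ 2 := by
    rw [bubble, Real.exp_log (by positivity)]
  simp only [hZ]
  rw [lap_comp_norm_sub_sq ξ x hφ (hasDerivAt_radialProfileDeriv hc.le hs),
    radialProfile_laplace_eq hc.le hs, hexp, rpow_eq_sq_rpow_half hr (α - 2),
    rpow_eq_sq_rpow_half hr α, show (α - 2) / 2 = α / 2 - 1 by ring]
  ring
end
end

section
/- Let α > 0 and Y₀(y) = (1 − |y|^α)/(1 + |y|^α). Then the function y ↦ (2α²|y|^{α−2}/(1 + |y|^α)²) · Y₀(y)² is integrable on ℝ² and ∫_{ℝ²} (2α²|y|^{α−2}/(1 + |y|^α)²) · Y₀(y)² dy = 4πα/3. -/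
open MeasureTheory Real

noncomputable section

/-! The integrand is radial, so in polar coordinates its integral is `2π ∫₀^∞ r F(r) dr`, where
`F` is its radial profile and `π` is the area of the unit disc. Substituting `t = 1 + r^α` turns
`r F(r) dr` into `2α (t - 2)² t⁻⁴ dt`, which has the primitive `2α (-t⁻¹ + 2t⁻² - (4/3) t⁻³)`;
it vanishes at infinity and equals `-2α/3` at `r = 0`, so the radial integral is `2α/3`. -/

open Set Filter Topology Metric Module

section PolarCoordinates

variable {E F : Type*} [NormedAddCommGroup E] [InnerProductSpace ℝ E] [FiniteDimensional ℝ E]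
  [MeasurableSpace E] [BorelSpace E] [NormedAddCommGroup F] [NormedSpace ℝ F]

lemma integrable_comp_norm_iff_of_finrank_eq_two (hE : finrank ℝ E = 2) {f : ℝ → F} :
    Integrable (fun x : E => f ‖x‖) ↔ IntegrableOn (fun r : ℝ => r • f r) (Ioi 0) := by
  have : Nontrivial E := Module.nontrivial_of_finrank_eq_succ hE
  simp [integrable_fun_norm_addHaar, hE]

lemma integral_comp_norm_of_finrank_eq_two (hE : finrank ℝ E = 2) (f : ℝ → F) :
    ∫ x : E, f ‖x‖ = (2 * π) • ∫ r in Ioi (0 : ℝ), r • f r := by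
  have : Nontrivial E := Module.nontrivial_of_finrank_eq_succ hE
  have hball : volume.real (ball (0 : E) 1) = π := by
    simp [Measure.real, InnerProductSpace.volume_ball_of_dim_even (k := 1) (by simpa using hE),
      pi_nonneg]
  rw [integral_fun_norm_addHaar, hE, hball, ← smul_assoc]
  norm_num

end PolarCoordinates

def kernelYnullSqRadial (α r : ℝ) : ℝ :=
  2 * α ^ 2 * r ^ (α - 2) / (1 + r ^ α) ^ 2 * ((1 - r ^ α) / (1 + r ^ α)) ^ 2

def kernelYnullSqPrimitive (α r : ℝ) : ℝ :=
  2 * α * (-(1 + r ^ α)⁻¹ + 2 * ((1 + r ^ α) ^ 2)⁻¹ - 4 / 3 * ((1 + r ^ α) ^ 3)⁻¹)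

section KernelYnullSq

variable {α : ℝ}

lemma hasDerivAt_kernelYnullSqPrimitive {r : ℝ} (hr : 0 < r) :
    HasDerivAt (kernelYnullSqPrimitive α) (r * kernelYnullSqRadial α r) r := by
  have hden : 1 + r ^ α ≠ 0 := by positivity
  have hb : HasDerivAt (fun r : ℝ => 1 + r ^ α) (α * r ^ (α - 1)) r :=
    (hasDerivAt_rpow_const (Or.inl hr.ne')).const_add 1
  unfold kernelYnullSqPrimitive
  refine ((((hb.inv hden).neg.add (((hb.pow 2).inv (pow_ne_zero _ hden)).const_mul 2)).sub
    (((hb.pow 3).inv (pow_ne_zero _ hden)).const_mul (4 / 3))).const_mul (2 * α)).congr_deriv ?_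
  rw [show α - 1 = α - 2 + 1 by ring, rpow_add_one hr.ne']
  simp only [kernelYnullSqRadial, Pi.pow_apply]
  field_simp
  ring

lemma mul_kernelYnullSqRadial_nonneg {r : ℝ} (hr : 0 < r) : 0 ≤ r * kernelYnullSqRadial α r := by
  have := rpow_nonneg hr.le (α - 2)
  unfold kernelYnullSqRadial
  positivity

lemma continuousAt_kernelYnullSqPrimitive_zero (hα : 0 < α) :
    ContinuousAt (kernelYnullSqPrimitive α) 0 := by
  unfold kernelYnullSqPrimitive
  fun_prop (disch := first | exact Or.inr hα.le | positivity)

lemma kernelYnullSqPrimitive_zero (hα : 0 < α) : kernelYnullSqPrimitive α 0 = -(2 * α / 3) := by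
  norm_num [kernelYnullSqPrimitive, zero_rpow hα.ne']
  ring

lemma tendsto_kernelYnullSqPrimitive_atTop (hα : 0 < α) :
    Tendsto (kernelYnullSqPrimitive α) atTop (𝓝 0) := by
  have hb : Tendsto (fun r : ℝ => 1 + r ^ α) atTop atTop :=
    tendsto_atTop_add_const_left _ 1 (tendsto_rpow_atTop hα)
  have hinv (n : ℕ) (hn : n ≠ 0) : Tendsto (fun r : ℝ => ((1 + r ^ α) ^ n)⁻¹) atTop (𝓝 0) :=
    tendsto_inv_atTop_zero.comp ((tendsto_pow_atTop hn).comp hb)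
  unfold kernelYnullSqPrimitive
  simpa using ((((hinv 1 one_ne_zero).neg.add ((hinv 2 two_ne_zero).const_mul 2)).sub
    ((hinv 3 three_ne_zero).const_mul (4 / 3))).const_mul (2 * α))

lemma integrableOn_Ioi_mul_kernelYnullSqRadial (hα : 0 < α) :
    IntegrableOn (fun r => r * kernelYnullSqRadial α r) (Ioi 0) :=
  integrableOn_Ioi_deriv_of_nonneg
    (continuousAt_kernelYnullSqPrimitive_zero hα).continuousWithinAt
    (fun _ hr => hasDerivAt_kernelYnullSqPrimitive hr)
    (fun _ hr => mul_kernelYnullSqRadial_nonneg hr) (tendsto_kernelYnullSqPrimitive_atTop hα)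

lemma integral_Ioi_mul_kernelYnullSqRadial (hα : 0 < α) :
    ∫ r in Ioi 0, r * kernelYnullSqRadial α r = 2 * α / 3 := by
  rw [integral_Ioi_of_hasDerivAt_of_nonneg
      (continuousAt_kernelYnullSqPrimitive_zero hα).continuousWithinAt
      (fun _ hr => hasDerivAt_kernelYnullSqPrimitive hr)
      (fun _ hr => mul_kernelYnullSqRadial_nonneg hr) (tendsto_kernelYnullSqPrimitive_atTop hα),
    kernelYnullSqPrimitive_zero hα, sub_neg_eq_add, zero_add]

end KernelYnullSq

theorem integral_kernel_Ynull_sq (α : ℝ) (hα : 0 < α) :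
    Integrable (fun y : Plane =>
        (2 * α ^ 2 * ‖y‖ ^ (α - 2) / (1 + ‖y‖ ^ α) ^ 2) * Ynull α y ^ 2) volume ∧
      ∫ y : Plane, (2 * α ^ 2 * ‖y‖ ^ (α - 2) / (1 + ‖y‖ ^ α) ^ 2) * Ynull α y ^ 2 =
        4 * π * α / 3 := by
  have hPlane : finrank ℝ Plane = 2 := finrank_euclideanSpace_fin
  change Integrable (fun y : Plane => kernelYnullSqRadial α ‖y‖) ∧
    ∫ y : Plane, kernelYnullSqRadial α ‖y‖ = 4 * π * α / 3
  rw [integrable_comp_norm_iff_of_finrank_eq_two hPlane,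
    integral_comp_norm_of_finrank_eq_two hPlane]
  refine ⟨integrableOn_Ioi_mul_kernelYnullSqRadial hα, ?_⟩
  simp only [smul_eq_mul, integral_Ioi_mul_kernelYnullSqRadial hα]
  ring
end
end

section
/- Let α > 0 and Y₀(y) = (1 − |y|^α)/(1 + |y|^α). Then the function y ↦ (2α²|y|^{α−2}/(1 + |y|^α)²) · Y₀(y) · log|y| is integrable on ℝ² and ∫_{ℝ²} (2α²|y|^{α−2}/(1 + |y|^α)²) · Y₀(y) · log|y| dy = −4π. -/
open MeasureTheory Real

noncomputable section

/-!
The integrand is radial, `g(‖y‖)`, so in polar coordinates its integral is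
`2π ∫₀^∞ r g(r) dr`.
The substitution `s = r^α` turns `r g(r) dr` into `2(1 - s) log s / (1 + s)³ ds`, which is
nonpositive and is the derivative of `2 s log s / (1 + s)² + 2 / (1 + s)`; this primitive
decreases from `2` at `s = 0` to `0` at `s = ∞`, so the integral converges and equals `-2`.
-/

open Set Filter Topology

section PolarPlane

variable {F : Type*} [NormedAddCommGroup F] [NormedSpace ℝ F]

theorem integrable_fun_norm_plane_iff {g : ℝ → F} :
    Integrable (fun x : EuclideanSpace ℝ (Fin 2) => g ‖x‖) ↔
      IntegrableOn (fun r : ℝ => r • g r) (Ioi 0) := by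
  simpa [finrank_euclideanSpace_fin] using
    integrable_fun_norm_addHaar (volume : Measure (EuclideanSpace ℝ (Fin 2))) (f := g)

theorem integral_fun_norm_plane (g : ℝ → F) :
    ∫ x : EuclideanSpace ℝ (Fin 2), g ‖x‖ =
      (2 * π) • ∫ r in Ioi (0 : ℝ), r • g r := by
  rw [integral_fun_norm_addHaar volume g, finrank_euclideanSpace_fin, measureReal_def,
    EuclideanSpace.volume_ball_fin_two]
  simp [mul_smul, pi_nonneg, two_smul]

end PolarPlane

theorem one_sub_mul_log_nonpos {s : ℝ} (hs : 0 ≤ s) : (1 - s) * log s ≤ 0 := by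
  rcases le_total s 1 with h | h
  · exact mul_nonpos_of_nonneg_of_nonpos (by linarith) (log_nonpos hs h)
  · exact mul_nonpos_of_nonpos_of_nonneg (by linarith) (log_nonneg h)

namespace KernelYnullLog

def density (s : ℝ) : ℝ := 2 * ((1 - s) * log s) / (1 + s) ^ 3

def primitive (s : ℝ) : ℝ := 2 * (s * log s) / (1 + s) ^ 2 + 2 / (1 + s)

theorem hasDerivAt_primitive {s : ℝ} (hs : s ≠ 0) (hs₁ : 1 + s ≠ 0) :
    HasDerivAt primitive (density s) s := by
  have hden : HasDerivAt (fun s : ℝ => 1 + s) 1 s := (hasDerivAt_id s).const_add 1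
  refine ((((hasDerivAt_mul_log hs).const_mul 2).div (hden.pow 2) (pow_ne_zero 2 hs₁)).add
    ((hasDerivAt_const s 2).div hden hs₁)).congr_deriv ?_
  simp only [Pi.pow_apply, density]
  field_simp
  ring

theorem density_nonpos {s : ℝ} (hs : 0 ≤ s) : density s ≤ 0 :=
  div_nonpos_of_nonpos_of_nonneg (by linarith [one_sub_mul_log_nonpos hs]) (by positivity)

theorem primitive_zero : primitive 0 = 2 := by
  simp [primitive]

theorem continuousAt_primitive_zero : ContinuousAt primitive 0 := by
  have hden : ContinuousAt (fun s : ℝ => 1 + s) 0 := by fun_prop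
  exact ((continuous_mul_log.continuousAt.const_mul 2).div (hden.pow 2) (by norm_num)).add
    (continuousAt_const.div hden (by norm_num))

theorem tendsto_primitive_atTop : Tendsto primitive atTop (𝓝 0) := by
  have hlog : (fun s : ℝ => s * log s) =o[atTop] fun s => (1 + s) ^ 2 := by
    refine ((Asymptotics.isBigO_refl id atTop).mul_isLittleO isLittleO_log_id_atTop).trans_isBigO ?_
    refine Asymptotics.IsBigO.of_bound 1 ?_
    filter_upwards [eventually_ge_atTop 0] with s hs
    simp only [id, Real.norm_eq_abs, abs_mul, one_mul, abs_pow]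
    rw [abs_of_nonneg hs, abs_of_nonneg (by linarith)]
    nlinarith
  have h1 := hlog.tendsto_div_nhds_zero.const_mul 2
  have h2 := tendsto_const_nhds (x := (2 : ℝ)).div_atTop
    (tendsto_atTop_add_const_left atTop 1 tendsto_id)
  convert h1.add h2 using 2 with s
  · simp only [primitive, id, mul_div_assoc]
  · simp

theorem integrableOn_Ioi_density : IntegrableOn density (Ioi 0) :=
  integrableOn_Ioi_deriv_of_nonpos continuousAt_primitive_zero.continuousWithinAt
    (fun _ hs => hasDerivAt_primitive hs.out.ne' (by linarith [hs.out]))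
    (fun _ hs => density_nonpos hs.out.le) tendsto_primitive_atTop

theorem integral_Ioi_density : ∫ s in Ioi 0, density s = -2 := by
  rw [integral_Ioi_of_hasDerivAt_of_nonpos continuousAt_primitive_zero.continuousWithinAt
    (fun _ hs => hasDerivAt_primitive hs.out.ne' (by linarith [hs.out]))
    (fun _ hs => density_nonpos hs.out.le) tendsto_primitive_atTop, primitive_zero]
  norm_num

def radial (α r : ℝ) : ℝ :=
  2 * α ^ 2 * r ^ (α - 2) / (1 + r ^ α) ^ 2 * ((1 - r ^ α) / (1 + r ^ α)) * log r

theorem mul_radial_eq {α r : ℝ} (hr : 0 < r) :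
    r * radial α r = (α * r ^ (α - 1)) * density (r ^ α) := by
  have hpow : r ^ (α - 1) = r ^ (α - 2) * r := by
    rw [show α - 1 = α - 2 + 1 by ring, rpow_add_one hr.ne']
  rw [hpow, radial, density, log_rpow hr]
  field_simp

theorem integrableOn_Ioi_mul_radial {α : ℝ} (hα : 0 < α) :
    IntegrableOn (fun r => r * radial α r) (Ioi 0) := by
  refine (integrableOn_congr_fun (fun r (hr : r ∈ Ioi 0) => mul_radial_eq (α := α) hr)
    measurableSet_Ioi).2 ?_
  simpa [abs_of_pos hα] using
    (integrableOn_Ioi_comp_rpow_iff density hα.ne').2 integrableOn_Ioi_density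

theorem integral_Ioi_mul_radial {α : ℝ} (hα : 0 < α) :
    ∫ r in Ioi 0, r * radial α r = -2 := by
  rw [setIntegral_congr_fun measurableSet_Ioi
    (fun r (hr : r ∈ Ioi 0) => mul_radial_eq (α := α) hr), ← integral_Ioi_density]
  simpa using integral_comp_rpow_Ioi_of_pos (g := density) hα

end KernelYnullLog

theorem integral_kernel_Ynull_log (α : ℝ) (hα : 0 < α) :
    Integrable (fun y : Plane =>
        (2 * α ^ 2 * ‖y‖ ^ (α - 2) / (1 + ‖y‖ ^ α) ^ 2) * Ynull α y * Real.log ‖y‖) volume ∧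
      ∫ y : Plane,
          (2 * α ^ 2 * ‖y‖ ^ (α - 2) / (1 + ‖y‖ ^ α) ^ 2) * Ynull α y * Real.log ‖y‖ =
        -(4 * π) := by
  change Integrable (fun y : Plane => KernelYnullLog.radial α ‖y‖) ∧
    ∫ y : Plane, KernelYnullLog.radial α ‖y‖ = -(4 * π)
  refine ⟨integrable_fun_norm_plane_iff.2 ?_, ?_⟩
  · simpa only [smul_eq_mul] using KernelYnullLog.integrableOn_Ioi_mul_radial hα
  · simp only [integral_fun_norm_plane, smul_eq_mul, KernelYnullLog.integral_Ioi_mul_radial hα]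
    ring
end
end

section
/- Let α > 0 and Y₀(y) = (1 − |y|^α)/(1 + |y|^α). Then the function y ↦ (2α²|y|^{α−2}/(1 + |y|^α)²) · Y₀(y) is integrable on ℝ² and ∫_{ℝ²} (2α²|y|^{α−2}/(1 + |y|^α)²) · Y₀(y) dy = 0. -/
open MeasureTheory Real

noncomputable section

/-! In polar coordinates the integral becomes `∫₀^∞ K(r) Y(r) dr` with
`K(r) = 2α² r^(α-1) / (1 + r^α)²` and `Y(r) = (1 - r^α) / (1 + r^α)`. Writing `w = (1 + r^α)⁻¹`,
which decreases from `1` at `r = 0` to `0` at `∞`, we have `K = (-2α w)' ≥ 0` and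
`K Y = (2α w (1 - w))'`. Hence `K` is integrable, it dominates `K Y` because `|Y| ≤ 1`, and
`∫ K Y` is the increment of `2α w (1 - w)`, which vanishes at both ends. -/

open Set Filter Topology

lemma abs_one_sub_div_one_add_le_one {t : ℝ} (ht : 0 ≤ t) : |(1 - t) / (1 + t)| ≤ 1 := by
  rw [abs_div, abs_of_pos (show 0 < 1 + t by linarith), div_le_one (by linarith), abs_le]
  constructor <;> linarith

section RadialProfile

variable {α : ℝ}

lemma hasDerivAt_inv_one_add_rpow {r : ℝ} (hr : 0 < r) :
    HasDerivAt (fun s : ℝ => (1 + s ^ α)⁻¹) (-(α * r ^ (α - 1)) / (1 + r ^ α) ^ 2) r :=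
  ((Real.hasDerivAt_rpow_const (Or.inl hr.ne')).const_add 1).inv (by positivity)

lemma continuousAt_inv_one_add_rpow_zero (hα : 0 ≤ α) :
    ContinuousAt (fun s : ℝ => (1 + s ^ α)⁻¹) 0 :=
  (continuousAt_const.add (Real.continuousAt_rpow_const 0 α (Or.inr hα))).inv₀
    (show (1 : ℝ) + 0 ^ α ≠ 0 by positivity)

lemma tendsto_inv_one_add_rpow_atTop (hα : 0 < α) :
    Tendsto (fun s : ℝ => (1 + s ^ α)⁻¹) atTop (𝓝 0) :=
  (tendsto_atTop_add_const_left _ 1 (tendsto_rpow_atTop hα)).inv_tendsto_atTop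

lemma integrableOn_Ioi_rpow_div_one_add_rpow_sq (hα : 0 < α) :
    IntegrableOn (fun r : ℝ => 2 * α ^ 2 * r ^ (α - 1) / (1 + r ^ α) ^ 2) (Ioi 0) := by
  refine integrableOn_Ioi_deriv_of_nonneg (g := fun s => -2 * α * (1 + s ^ α)⁻¹)
    ((continuousAt_inv_one_add_rpow_zero hα.le).const_mul (-2 * α)).continuousWithinAt
    (fun r hr => ?_) (fun r hr => ?_)
    (by simpa using (tendsto_inv_one_add_rpow_atTop hα).const_mul (-2 * α))
  · exact ((hasDerivAt_inv_one_add_rpow hr).const_mul (-2 * α)).congr_deriv (by ring)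
  · have : 0 < r ^ (α - 1) := Real.rpow_pos_of_pos hr _
    positivity

lemma integrableOn_Ioi_rpow_div_one_add_rpow_sq_mul (hα : 0 < α) :
    IntegrableOn (fun r : ℝ =>
      2 * α ^ 2 * r ^ (α - 1) / (1 + r ^ α) ^ 2 * ((1 - r ^ α) / (1 + r ^ α))) (Ioi 0) := by
  refine (integrableOn_Ioi_rpow_div_one_add_rpow_sq hα).mono' (by fun_prop) ?_
  filter_upwards [ae_restrict_mem measurableSet_Ioi] with r (hr : 0 < r)
  have : 0 < r ^ (α - 1) := Real.rpow_pos_of_pos hr _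
  rw [norm_mul, Real.norm_of_nonneg (by positivity), Real.norm_eq_abs]
  exact mul_le_of_le_one_right (by positivity)
    (abs_one_sub_div_one_add_le_one (Real.rpow_nonneg hr.le α))

lemma hasDerivAt_inv_one_add_rpow_mul_one_sub {r : ℝ} (hr : 0 < r) :
    HasDerivAt (fun s : ℝ => 2 * α * ((1 + s ^ α)⁻¹ * (1 - (1 + s ^ α)⁻¹)))
      (2 * α ^ 2 * r ^ (α - 1) / (1 + r ^ α) ^ 2 * ((1 - r ^ α) / (1 + r ^ α))) r := by
  have hw := hasDerivAt_inv_one_add_rpow (α := α) hr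
  have : 0 < 1 + r ^ α := by positivity
  refine ((hw.mul (hw.const_sub 1)).const_mul (2 * α)).congr_deriv ?_
  field_simp
  ring

lemma integral_Ioi_rpow_div_one_add_rpow_sq_mul (hα : 0 < α) :
    ∫ r in Ioi 0, 2 * α ^ 2 * r ^ (α - 1) / (1 + r ^ α) ^ 2 * ((1 - r ^ α) / (1 + r ^ α)) = 0 := by
  have hw0 := continuousAt_inv_one_add_rpow_zero hα.le
  have hw := tendsto_inv_one_add_rpow_atTop hα
  have := integral_Ioi_of_hasDerivAt_of_tendsto
    ((hw0.mul (continuousAt_const.sub hw0)).const_mul (2 * α)).continuousWithinAt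
    (fun r hr => hasDerivAt_inv_one_add_rpow_mul_one_sub hr)
    (integrableOn_Ioi_rpow_div_one_add_rpow_sq_mul hα)
    ((hw.mul (tendsto_const_nhds.sub hw)).const_mul (2 * α))
  simpa [Real.zero_rpow hα.ne'] using this

end RadialProfile

theorem integral_kernel_Ynull (α : ℝ) (hα : 0 < α) :
    Integrable (fun y : Plane =>
        (2 * α ^ 2 * ‖y‖ ^ (α - 2) / (1 + ‖y‖ ^ α) ^ 2) * Ynull α y) volume ∧
      ∫ y : Plane, (2 * α ^ 2 * ‖y‖ ^ (α - 2) / (1 + ‖y‖ ^ α) ^ 2) * Ynull α y = 0 := by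
  set f : ℝ → ℝ := fun r =>
    2 * α ^ 2 * r ^ (α - 2) / (1 + r ^ α) ^ 2 * ((1 - r ^ α) / (1 + r ^ α))
  change Integrable (fun y : Plane => f ‖y‖) volume ∧ ∫ y : Plane, f ‖y‖ = 0
  have hpolar : ∀ r ∈ Ioi (0 : ℝ), r ^ (Module.finrank ℝ Plane - 1) • f r =
      2 * α ^ 2 * r ^ (α - 1) / (1 + r ^ α) ^ 2 * ((1 - r ^ α) / (1 + r ^ α)) := by
    intro r (hr : 0 < r)
    have : r ^ (α - 2) = r ^ (α - 1) / r := by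
      rw [← Real.rpow_sub_one hr.ne']
      ring_nf
    simp only [finrank_euclideanSpace_fin, Nat.add_one_sub_one, pow_one, smul_eq_mul, f, this]
    field_simp
  constructor
  · rw [integrable_fun_norm_addHaar, integrableOn_congr_fun hpolar measurableSet_Ioi]
    exact integrableOn_Ioi_rpow_div_one_add_rpow_sq_mul hα
  · rw [integral_fun_norm_addHaar, setIntegral_congr_fun measurableSet_Ioi hpolar,
      integral_Ioi_rpow_div_one_add_rpow_sq_mul hα, smul_zero, smul_zero]
end
end
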